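/- Let B ∈ ℂ^{d×(n−1)} be a matrix of rank d, let α ∈ ℂ^{n−1} satisfy ‖α‖₁ ≤ 1, let v = Bα, and let D = [B, v] ∈ ℂ^{d×n}. If a matrix A ∈ ℂ^{m×d} satisfies the D-null space property of order k, then A satisfies the B-null space property of the same order k. -/

import Mathlib

/-!
Extend a `v` with `Bv ∈ ker A` by a zero last coordinate; then `D(v, 0) = Bv`, and the `D`-NSP
gives `(w, t) ∈ ker D`, i.e. `B(w + tα) = 0`. Folding the last coordinate back along `α` costs
at most `|t| ‖α‖₁ ≤ |t|` in ℓ¹, which is exactly what `(w, t)` paid for it, so `w + tα ∈ ker B`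
witnesses the `B`-NSP.
-/

open Finset Matrix

/-- The ℓ¹ norm of a vector: the sum of the absolute values of its entries. -/
noncomputable def l1norm {n : Type*} [Fintype n] (v : n → ℂ) : ℝ :=
  ∑ i, ‖v i‖

/-- The ℓ² (Euclidean) norm of a vector. -/
noncomputable def l2norm {n : Type*} [Fintype n] (v : n → ℂ) : ℝ :=
  Real.sqrt (∑ i, ‖v i‖ ^ 2)

/-- `restrict v T` agrees with `v` on the index set `T` and is zero elsewhere. -/
def restrict {n : Type*} [Fintype n] [DecidableEq n] (v : n → ℂ) (T : Finset n) : n → ℂ :=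
  fun i => if i ∈ T then v i else 0

/-- A vector is `k`-sparse if it has at most `k` nonzero entries. -/
def KSparse {n : Type*} [Fintype n] [DecidableEq n] (k : ℕ) (z : n → ℂ) : Prop :=
  ∃ T : Finset n, T.card ≤ k ∧ ∀ i ∉ T, z i = 0

/-- `A` satisfies the `D`-null space property of order `k` (`k`-`D`-NSP):
for every index set `T` with `|T| ≤ k` and every `v` with `Dv ∈ ker A` and `Dv ≠ 0`,
there exists `u ∈ ker D` such that `‖v_T + u‖₁ < ‖v_{T^c}‖₁`. -/
def DNSP {m d n : Type*} [Fintype m] [Fintype d] [Fintype n] [DecidableEq n]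
    (A : Matrix m d ℂ) (D : Matrix d n ℂ) (k : ℕ) : Prop :=
  ∀ T : Finset n, T.card ≤ k → ∀ v : n → ℂ,
    A.mulVec (D.mulVec v) = 0 → D.mulVec v ≠ 0 →
    ∃ u : n → ℂ, D.mulVec u = 0 ∧ l1norm (restrict v T + u) < l1norm (restrict v Tᶜ)

/-- `M` satisfies the null space property of order `k` (`k`-NSP):
for every nonzero `v ∈ ker M` and every index set `T` with `|T| ≤ k`,
`‖v_T‖₁ < ‖v_{T^c}‖₁`. -/
def NSP {m n : Type*} [Fintype m] [Fintype n] [DecidableEq n]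
    (M : Matrix m n ℂ) (k : ℕ) : Prop :=
  ∀ v : n → ℂ, M.mulVec v = 0 → v ≠ 0 → ∀ T : Finset n, T.card ≤ k →
    l1norm (restrict v T) < l1norm (restrict v Tᶜ)

/-- `A` satisfies the strong `D`-null space property of order `k` with constant `c`
(`k`-`D`-SNSP): for every index set `T` with `|T| ≤ k` and every `v ∈ ker (AD)`,
there exists `u ∈ ker D` such that `‖v_{T^c}‖₁ − ‖v_T + u‖₁ ≥ c‖Dv‖₂`. -/
def DSNSP {m d n : Type*} [Fintype m] [Fintype d] [Fintype n] [DecidableEq n]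
    (A : Matrix m d ℂ) (D : Matrix d n ℂ) (k : ℕ) (c : ℝ) : Prop :=
  ∀ T : Finset n, T.card ≤ k → ∀ v : n → ℂ, (A * D).mulVec v = 0 →
    ∃ u : n → ℂ, D.mulVec u = 0 ∧
      c * l2norm (D.mulVec v) ≤ l1norm (restrict v Tᶜ) - l1norm (restrict v T + u)

/-- A `d × n` matrix is full spark if every `d` of its columns are linearly independent. -/
def FullSpark {d n : ℕ} (D : Matrix (Fin d) (Fin n) ℂ) : Prop :=
  ∀ S : Finset (Fin n), S.card = d →
    LinearIndependent ℂ (fun j : S => Dᵀ (j : Fin n))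

theorem Fin.snoc_add_snoc {M : Type*} [Add M] {n : ℕ} (v w : Fin n → M) (s t : M) :
    (Fin.snoc v s : Fin (n + 1) → M) + Fin.snoc w t = Fin.snoc (v + w) (s + t) := by
  ext i
  induction i using Fin.lastCases <;> simp

theorem Matrix.of_snoc_mulVec_snoc {R ι : Type*} [CommSemiring R] [Fintype ι] {n : ℕ}
    (B : Matrix ι (Fin n) R) (c : ι → R) (v : Fin n → R) (t : R) :
    (Matrix.of fun x => Fin.snoc (B x) (c x)) *ᵥ Fin.snoc v t = B *ᵥ v + t • c := by
  ext x
  simp [Matrix.mulVec, dotProduct, Fin.sum_univ_castSucc, mul_comm]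

section l1norm

variable {ι : Type*} [Fintype ι]

theorem l1norm_add_le (v w : ι → ℂ) : l1norm (v + w) ≤ l1norm v + l1norm w := by
  unfold l1norm
  rw [← Finset.sum_add_distrib]
  exact Finset.sum_le_sum fun i _ => norm_add_le (v i) (w i)

theorem l1norm_smul (t : ℂ) (v : ι → ℂ) : l1norm (t • v) = ‖t‖ * l1norm v := by
  simp [l1norm, Finset.mul_sum]

theorem l1norm_snoc {n : ℕ} (v : Fin n → ℂ) (t : ℂ) :
    l1norm (Fin.snoc v t : Fin (n + 1) → ℂ) = l1norm v + ‖t‖ := by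
  simp [l1norm, Fin.sum_univ_castSucc]

end l1norm

theorem restrict_snoc_map_castSucc {n : ℕ} (v : Fin n → ℂ) (t : ℂ) (T : Finset (Fin n)) :
    restrict (Fin.snoc v t : Fin (n + 1) → ℂ) (T.map Fin.castSuccEmb) =
      Fin.snoc (restrict v T) 0 := by
  ext i
  induction i using Fin.lastCases <;> simp [_root_.restrict]

theorem restrict_snoc_compl_map_castSucc {n : ℕ} (v : Fin n → ℂ) (t : ℂ) (T : Finset (Fin n)) :
    restrict (Fin.snoc v t : Fin (n + 1) → ℂ) (T.map Fin.castSuccEmb)ᶜ =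
      Fin.snoc (restrict v Tᶜ) t := by
  ext i
  induction i using Fin.lastCases <;> simp [_root_.restrict]

theorem stmt_5_general {m d n k : ℕ} (B : Matrix (Fin d) (Fin n) ℂ)
    (α : Fin n → ℂ) (hα : l1norm α ≤ 1)
    (D : Matrix (Fin d) (Fin (n + 1)) ℂ)
    (hD : D = Matrix.of fun x => Fin.snoc (B x) (B.mulVec α x))
    (A : Matrix (Fin m) (Fin d) ℂ) (hA : DNSP A D k) :
    DNSP A B k := by
  subst hD
  intro T hT v hAv hv
  have hDv : (Matrix.of fun x => Fin.snoc (B x) ((B *ᵥ α) x)) *ᵥ Fin.snoc v 0 = B *ᵥ v := by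
    simp [Matrix.of_snoc_mulVec_snoc]
  obtain ⟨u, hu, hlt⟩ := hA (T.map Fin.castSuccEmb) (by simpa using hT) (Fin.snoc v 0)
    (by rwa [hDv]) (by rwa [hDv])
  rw [← Fin.snoc_init_self u, Matrix.of_snoc_mulVec_snoc] at hu
  rw [← Fin.snoc_init_self u, restrict_snoc_map_castSucc, restrict_snoc_compl_map_castSucc,
    Fin.snoc_add_snoc, l1norm_snoc, l1norm_snoc, zero_add, norm_zero, add_zero] at hlt
  set w := Fin.init u
  set t := u (Fin.last n)
  refine ⟨w + t • α, by rwa [mulVec_add, mulVec_smul], ?_⟩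
  calc l1norm (restrict v T + (w + t • α))
      ≤ l1norm (restrict v T + w) + ‖t‖ * l1norm α := by
        rw [← add_assoc, ← l1norm_smul]; exact l1norm_add_le _ _
    _ ≤ l1norm (restrict v T + w) + ‖t‖ := by
        gcongr; exact mul_le_of_le_one_right (norm_nonneg t) hα
    _ < l1norm (restrict v Tᶜ) := hlt

/-- Proposition 2 (paper): let `B` be a full rank `d × n` matrix, `‖α‖₁ ≤ 1`, `v = Bα`,
and `D = [B, v]`. If `A` satisfies the `D`-null space property of order `k`, then `A`
satisfies the `B`-null space property of order `k`. -/
theorem stmt_5 {m d n k : ℕ} (B : Matrix (Fin d) (Fin n) ℂ) (hB : B.rank = d)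
    (α : Fin n → ℂ) (hα : l1norm α ≤ 1)
    (D : Matrix (Fin d) (Fin (n + 1)) ℂ)
    (hD : D = Matrix.of fun x => Fin.snoc (B x) (B.mulVec α x))
    (A : Matrix (Fin m) (Fin d) ℂ) (hA : DNSP A D k) :
    DNSP A B k :=
  stmt_5_general B α hα D hD A hA
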